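/- arXiv:2602.03363 — 3 statements merged into one kernel-verified Lean document; each statement's English description precedes it below -/
import Mathlib

section
/- Let n ≥ 2 and let h ∈ Γ_n be nonzero, span an extreme ray of Γ_n, and not be a nonnegative multiple of r_{U_{1,1}^n}. Then h and r_{U_{1,1}^n} are linearly independent and the cone F = {a·h + b·r_{U_{1,1}^n} : a, b ≥ 0} is a face of Γ_n (hence a 2-dimensional face). -/
open Finset

/-- Shannon entropy (natural log) of the random variable `X : Ω → S`
under the probability mass function `p : Ω → ℝ`. -/
noncomputable def Hent {Ω S : Type} [Fintype Ω] [DecidableEq S]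
    (p : Ω → ℝ) (X : Ω → S) : ℝ :=
  ∑ s ∈ Finset.univ.image X,
    Real.negMulLog (∑ ω ∈ Finset.univ.filter (fun ω => X ω = s), p ω)

/-- The joint random variable `(X_i)_{i ∈ A}`. -/
def joint {Ω : Type} {n : ℕ} (X : Fin n → Ω → ℕ) (A : Finset (Fin n)) :
    Ω → (A → ℕ) :=
  fun ω i => X i ω

/-- A set function `h : 2^{N_n} → ℝ` is entropic if it is the entropy function of
some random vector `(X_1, …, X_n)` on a finite probability space. -/
def IsEntropic {n : ℕ} (h : Finset (Fin n) → ℝ) : Prop :=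
  ∃ (N : ℕ) (p : Fin N → ℝ) (X : Fin n → Fin N → ℕ),
    (∀ ω, 0 ≤ p ω) ∧ (∑ ω, p ω) = 1 ∧
    ∀ A : Finset (Fin n), h A = Hent p (joint X A)

/-- The polymatroidal region Γ_n. -/
def PolymatroidRegion (n : ℕ) : Set (Finset (Fin n) → ℝ) :=
  {h | h ∅ = 0 ∧ (∀ A, 0 ≤ h A) ∧ (∀ A B, A ⊆ B → h A ≤ h B) ∧
       (∀ A B, h (A ∩ B) + h (A ∪ B) ≤ h A + h B)}

/-- A nonzero `h ∈ Γ_n` spans an extreme ray of `Γ_n` if whenever `h₁, h₂ ∈ Γ_n` and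
`h₁ + h₂` is a nonnegative multiple of `h`, both `h₁` and `h₂` are nonnegative
multiples of `h`. -/
def SpansExtremeRay {n : ℕ} (h : Finset (Fin n) → ℝ) : Prop :=
  h ∈ PolymatroidRegion n ∧ h ≠ 0 ∧
  ∀ h₁ h₂ : Finset (Fin n) → ℝ, h₁ ∈ PolymatroidRegion n → h₂ ∈ PolymatroidRegion n →
    (∃ c : ℝ, 0 ≤ c ∧ h₁ + h₂ = c • h) →
    (∃ c₁ : ℝ, 0 ≤ c₁ ∧ h₁ = c₁ • h) ∧ (∃ c₂ : ℝ, 0 ≤ c₂ ∧ h₂ = c₂ • h)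

/-- `F ⊆ Γ_n` is a face of `Γ_n` if whenever `h₁, h₂ ∈ Γ_n` and `h₁ + h₂ ∈ F`,
both `h₁` and `h₂` lie in `F`. -/
def IsFace (n : ℕ) (F : Set (Finset (Fin n) → ℝ)) : Prop :=
  F ⊆ PolymatroidRegion n ∧
  ∀ h₁ h₂ : Finset (Fin n) → ℝ, h₁ ∈ PolymatroidRegion n → h₂ ∈ PolymatroidRegion n →
    h₁ + h₂ ∈ F → h₁ ∈ F ∧ h₂ ∈ F

/-- A matroid on ground set `N_n`, given by its rank function. -/
structure MatroidRk (n : ℕ) where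
  r : Finset (Fin n) → ℕ
  le_card : ∀ A, r A ≤ A.card
  mono : ∀ ⦃A B : Finset (Fin n)⦄, A ⊆ B → r A ≤ r B
  submod : ∀ A B : Finset (Fin n), r (A ∩ B) + r (A ∪ B) ≤ r A + r B

/-- The rank function of a matroid, viewed as a real-valued set function. -/
def MatroidRk.rr {n : ℕ} (M : MatroidRk n) : Finset (Fin n) → ℝ :=
  fun A => (M.r A : ℝ)

/-- A set is independent if its rank equals its cardinality. -/
def MatroidRk.Indep {n : ℕ} (M : MatroidRk n) (A : Finset (Fin n)) : Prop :=
  M.r A = A.card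

/-- A circuit is a minimal dependent set. -/
def MatroidRk.IsCircuit {n : ℕ} (M : MatroidRk n) (C : Finset (Fin n)) : Prop :=
  ¬ M.Indep C ∧ ∀ A ⊂ C, M.Indep A

/-- An element is a loop if its rank is zero. -/
def MatroidRk.IsLoop {n : ℕ} (M : MatroidRk n) (e : Fin n) : Prop :=
  M.r {e} = 0

/-- Two distinct elements are parallel if each has rank one and together they have rank one. -/
def MatroidRk.Parallel {n : ℕ} (M : MatroidRk n) (e f : Fin n) : Prop :=
  e ≠ f ∧ M.r {e} = 1 ∧ M.r {f} = 1 ∧ M.r {e, f} = 1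

/-- The subset `{1, …, k}` of `N_n` (in `Fin n`, the elements with value `< k`). -/
def alphaSet (n k : ℕ) : Finset (Fin n) :=
  Finset.univ.filter (fun i => (i : ℕ) < k)

/-- The rank function of the rank-one matroid `U_{1,k}^n`:
`A ↦ 1` if `A ∩ {1, …, k} ≠ ∅` and `0` otherwise. -/
def rUone (n k : ℕ) : Finset (Fin n) → ℝ :=
  fun A => if (A ∩ alphaSet n k).Nonempty then 1 else 0

/-- The rank function of the uniform matroid `U_{n-1,n}`: `A ↦ min (n-1) |A|`. -/
def rUnif (n : ℕ) : Finset (Fin n) → ℝ :=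
  fun A => ((min (n - 1) A.card : ℕ) : ℝ)

/-- The p-characteristic set `χ_M` of a matroid `M`. -/
def chi {n : ℕ} (M : MatroidRk n) : Set ℤ :=
  {v | 2 ≤ v ∧ IsEntropic (fun A => Real.log (v : ℝ) * M.rr A)}

/-!
Write `r = r_{U_{1,1}^n}`, the indicator of containing the first element `e` (index `0` in `Fin n`),
and `λ(g) = g(N) - g(N \ e)`. Submodularity gives `λ(g) ≤ g(A) - g(A \ e)` whenever `e ∈ A`, so the
tightening `T g = g - λ(g) • r` of a polymatroid is again a polymatroid, and `T` is linear.
Splitting `h = T h + λ(h) • r` and using extremality forces `λ(h) = 0`, which already separates `h`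
from `r`. If `h₁ + h₂ = a • h + b • r` with `h₁, h₂ ∈ Γ_n`, tightening both sides gives
`T h₁ + T h₂ = a • h`, so each `T hᵢ` is a multiple of `h` and `hᵢ = T hᵢ + λ(hᵢ) • r` lies in the cone.
-/

namespace PolymatroidRegion

variable {n : ℕ} {g g₁ g₂ : Finset (Fin n) → ℝ}

theorem smul_mem (hg : g ∈ PolymatroidRegion n) {c : ℝ} (hc : 0 ≤ c) :
    c • g ∈ PolymatroidRegion n := by
  obtain ⟨h0, hpos, hmono, hsub⟩ := hg
  refine ⟨by simp [h0], fun A => mul_nonneg hc (hpos A),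
    fun A B hAB => mul_le_mul_of_nonneg_left (hmono A B hAB) hc, fun A B => ?_⟩
  simp only [Pi.smul_apply, smul_eq_mul, ← mul_add]
  exact mul_le_mul_of_nonneg_left (hsub A B) hc

theorem add_mem (hg₁ : g₁ ∈ PolymatroidRegion n) (hg₂ : g₂ ∈ PolymatroidRegion n) :
    g₁ + g₂ ∈ PolymatroidRegion n := by
  obtain ⟨h0, hpos, hmono, hsub⟩ := hg₁
  obtain ⟨h0', hpos', hmono', hsub'⟩ := hg₂
  refine ⟨by simp [h0, h0'], fun A => add_nonneg (hpos A) (hpos' A),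
    fun A B hAB => add_le_add (hmono A B hAB) (hmono' A B hAB), fun A B => ?_⟩
  simp only [Pi.add_apply]
  linarith [hsub A B, hsub' A B]

end PolymatroidRegion

section Tightening

variable {n : ℕ} (e : Fin n)

def memIndicator : Finset (Fin n) → ℝ := fun A => if e ∈ A then 1 else 0

def marginal : (Finset (Fin n) → ℝ) →ₗ[ℝ] ℝ :=
  LinearMap.proj (R := ℝ) (φ := fun _ => ℝ) univ - LinearMap.proj (univ.erase e)

def tighten : (Finset (Fin n) → ℝ) →ₗ[ℝ] (Finset (Fin n) → ℝ) :=
  LinearMap.id - (marginal e).smulRight (memIndicator e)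

variable {e} {g : Finset (Fin n) → ℝ}

theorem rUone_one_eq_memIndicator (hn : 0 < n) : rUone n 1 = memIndicator ⟨0, hn⟩ := by
  funext A
  have hmem : (A ∩ alphaSet n 1).Nonempty ↔ (⟨0, hn⟩ : Fin n) ∈ A := by
    simp only [Finset.Nonempty, alphaSet, mem_inter, mem_filter, mem_univ, true_and,
      Nat.lt_one_iff]
    exact ⟨fun ⟨x, hx, hx0⟩ => (Fin.ext hx0 : x = ⟨0, hn⟩) ▸ hx, fun h0 => ⟨_, h0, rfl⟩⟩
  simp only [rUone, memIndicator, hmem]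

theorem memIndicator_mem : memIndicator e ∈ PolymatroidRegion n := by
  refine ⟨by simp [memIndicator], fun A => ?_, fun A B hAB => ?_, fun A B => ?_⟩ <;>
    simp only [memIndicator]
  · split_ifs <;> norm_num
  · by_cases hA : e ∈ A
    · simp [hA, hAB hA]
    · split_ifs <;> norm_num
  · by_cases hA : e ∈ A <;> by_cases hB : e ∈ B <;> simp [hA, hB]

theorem marginal_apply : marginal e g = g univ - g (univ.erase e) := rfl

theorem marginal_memIndicator : marginal e (memIndicator e) = 1 := by
  simp [marginal_apply, memIndicator]

theorem marginal_nonneg (hg : g ∈ PolymatroidRegion n) : 0 ≤ marginal e g :=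
  sub_nonneg.2 (hg.2.2.1 _ _ (erase_subset e univ))

theorem marginal_le_sub_erase (hg : g ∈ PolymatroidRegion n) {A : Finset (Fin n)} (hA : e ∈ A) :
    marginal e g ≤ g A - g (A.erase e) := by
  have hinter : A ∩ univ.erase e = A.erase e := by
    ext x; simp [and_comm]
  have hunion : A ∪ univ.erase e = univ := by
    ext x; by_cases hx : x = e <;> simp [hx, hA]
  have hsub := hg.2.2.2 A (univ.erase e)
  rw [hinter, hunion] at hsub
  rw [marginal_apply]
  linarith

theorem tighten_apply (A : Finset (Fin n)) :
    tighten e g A = g A - if e ∈ A then marginal e g else 0 := by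
  simp [tighten, memIndicator]

theorem tighten_add_marginal_smul (g : Finset (Fin n) → ℝ) :
    tighten e g + marginal e g • memIndicator e = g := by
  simp [tighten]

theorem tighten_memIndicator : tighten e (memIndicator e) = 0 := by
  simp [tighten, marginal_memIndicator]

theorem tighten_of_marginal_eq_zero (hg : marginal e g = 0) : tighten e g = g := by
  simp [tighten, hg]

theorem tighten_mem (hg : g ∈ PolymatroidRegion n) : tighten e g ∈ PolymatroidRegion n := by
  have hmarg : ∀ {A}, e ∈ A → marginal e g ≤ g A - g (A.erase e) := marginal_le_sub_erase hg
  obtain ⟨h0, hpos, hmono, hsub⟩ := hg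
  refine ⟨by simp [tighten_apply, h0], fun A => ?_, fun A B hAB => ?_, fun A B => ?_⟩ <;>
    simp only [tighten_apply]
  · split_ifs with hA
    · linarith [hmarg hA, hpos (A.erase e)]
    · simpa using hpos A
  · by_cases hB : e ∈ B
    · by_cases hA : e ∈ A
      · simp only [hA, hB, if_true]
        linarith [hmono A B hAB]
      · have hAB' : A ⊆ B.erase e := fun x hx =>
          mem_erase.2 ⟨fun hxe => hA (hxe ▸ hx), hAB hx⟩
        simp only [hA, hB, if_true, if_false]
        linarith [hmono A _ hAB', hmarg hB]
    · have hA : e ∉ A := fun hA => hB (hAB hA)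
      simp only [hA, hB, if_false]
      linarith [hmono A B hAB]
  · have := hsub A B
    by_cases hA : e ∈ A <;> by_cases hB : e ∈ B <;> simp [hA, hB] <;> linarith

end Tightening

section ExtremeRay

variable {n : ℕ} {e : Fin n} {h : Finset (Fin n) → ℝ}

theorem marginal_eq_zero_of_spansExtremeRay (hext : SpansExtremeRay h)
    (hnm : ¬ ∃ c : ℝ, 0 ≤ c ∧ h = c • memIndicator e) : marginal e h = 0 := by
  obtain ⟨hΓ, -, hsplit⟩ := hext
  obtain ⟨-, c, hc, hceq⟩ := hsplit _ _ (tighten_mem (e := e) hΓ)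
    (PolymatroidRegion.smul_mem memIndicator_mem (marginal_nonneg hΓ))
    ⟨1, zero_le_one, by rw [one_smul, tighten_add_marginal_smul]⟩
  rcases hc.eq_or_lt with rfl | hcpos
  · simpa [memIndicator] using congrFun hceq univ
  · refine absurd ⟨marginal e h / c, div_nonneg (marginal_nonneg hΓ) hc, ?_⟩ hnm
    rw [div_eq_inv_mul, mul_smul, hceq, inv_smul_smul₀ hcpos.ne']

theorem linearIndependent_pair_memIndicator (hh : h ≠ 0) (hmarg : marginal e h = 0) :
    LinearIndependent ℝ ![h, memIndicator e] := by
  refine (LinearIndependent.pair_iff' hh).2 fun a ha => ?_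
  have := congrArg (marginal e) ha
  simp [hmarg, marginal_memIndicator] at this

theorem isFace_cone_memIndicator (hext : SpansExtremeRay h) (hmarg : marginal e h = 0) :
    IsFace n {g | ∃ a b : ℝ, 0 ≤ a ∧ 0 ≤ b ∧ g = a • h + b • memIndicator e} := by
  obtain ⟨hΓ, -, hsplit⟩ := hext
  refine ⟨?_, fun h₁ h₂ hm₁ hm₂ ⟨a, b, ha, _, hsum⟩ => ?_⟩
  · rintro g ⟨a, b, ha, hb, rfl⟩
    exact PolymatroidRegion.add_mem (PolymatroidRegion.smul_mem hΓ ha)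
      (PolymatroidRegion.smul_mem memIndicator_mem hb)
  have htsum : tighten e h₁ + tighten e h₂ = a • h := by
    rw [← map_add, hsum, map_add, map_smul, map_smul, tighten_of_marginal_eq_zero hmarg,
      tighten_memIndicator, smul_zero, add_zero]
  obtain ⟨⟨c₁, hc₁, heq₁⟩, ⟨c₂, hc₂, heq₂⟩⟩ :=
    hsplit _ _ (tighten_mem hm₁) (tighten_mem hm₂) ⟨a, ha, htsum⟩
  exact ⟨⟨c₁, marginal e h₁, hc₁, marginal_nonneg hm₁, by rw [← heq₁, tighten_add_marginal_smul]⟩,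
    ⟨c₂, marginal e h₂, hc₂, marginal_nonneg hm₂, by rw [← heq₂, tighten_add_marginal_smul]⟩⟩

end ExtremeRay

/-- if `h` spans an extreme ray of `Γ_n` and is not a nonnegative multiple of
`r_{U_{1,1}^n}`, then `h` and `r_{U_{1,1}^n}` are linearly independent and the cone they span
is a face of `Γ_n`. -/
theorem stmt1 (n : ℕ) (hn : 2 ≤ n) (h : Finset (Fin n) → ℝ)
    (hext : SpansExtremeRay h)
    (hnm : ¬ ∃ c : ℝ, 0 ≤ c ∧ h = c • rUone n 1) :
    LinearIndependent ℝ ![h, rUone n 1] ∧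
    IsFace n {g | ∃ a b : ℝ, 0 ≤ a ∧ 0 ≤ b ∧ g = a • h + b • rUone n 1} := by
  rw [rUone_one_eq_memIndicator (by omega)] at hnm ⊢
  have hmarg := marginal_eq_zero_of_spansExtremeRay hext hnm
  exact ⟨linearIndependent_pair_memIndicator hext.2.1 hmarg, isFace_cone_memIndicator hext hmarg⟩
end

section
/- Let M₁ and M₂ be matroids on the ground set N_n such that every circuit of M₁ is also a circuit of M₂. Then for every C ⊆ N_n and every S ⊆ N_n \ C, r_{M₁}(C∪S) − r_{M₁}(C) ≥ r_{M₂}(C∪S) − r_{M₂}(C). -/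
open Finset

/-! If `e` is spanned by `C` in `M₁`, it is spanned by `C` in `M₂`: shrinking `C` to a minimal
set spanning `e` in `M₁`, that set is independent and adding `e` gives a circuit of `M₁`,
hence of `M₂`, in which `e` is spanned by the rest. So adding one element raises the rank of
`M₂` by at most as much as that of `M₁`, and the inequality follows by adding the elements of
`S` to `C` one at a time. -/

namespace MatroidRk

variable {n : ℕ} (M : MatroidRk n)

def Spans (A : Finset (Fin n)) (e : Fin n) : Prop :=
  M.r (insert e A) = M.r A

lemma r_empty : M.r ∅ = 0 :=
  Nat.le_zero.mp (M.le_card ∅)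

lemma r_le_r_insert (e : Fin n) (A : Finset (Fin n)) : M.r A ≤ M.r (insert e A) :=
  M.mono (subset_insert e A)

lemma r_insert_le (e : Fin n) (A : Finset (Fin n)) : M.r (insert e A) ≤ M.r A + 1 := by
  have hsub := M.submod {e} A
  have he : M.r {e} ≤ 1 := M.le_card {e}
  rw [← insert_eq] at hsub
  omega

lemma r_insert_of_not_spans {A : Finset (Fin n)} {e : Fin n} (h : ¬ M.Spans A e) :
    M.r (insert e A) = M.r A + 1 := by
  have := M.r_le_r_insert e A
  have := M.r_insert_le e A
  unfold Spans at h
  omega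

variable {M} in
lemma Indep.subset {A B : Finset (Fin n)} (hB : M.Indep B) (hAB : A ⊆ B) : M.Indep A := by
  have hsub := M.submod A (B \ A)
  rw [inter_sdiff_self, union_sdiff_of_subset hAB, M.r_empty] at hsub
  have hA := M.le_card A
  have hBA := M.le_card (B \ A)
  rw [card_sdiff_of_subset hAB] at hBA
  have := card_le_card hAB
  unfold Indep at *
  omega

variable {M} in
lemma Spans.mono {A B : Finset (Fin n)} {e : Fin n} (h : M.Spans A e) (hAB : A ⊆ B) :
    M.Spans B e := by
  have hsub := M.submod (insert e A) B
  rw [insert_union, union_eq_right.mpr hAB] at hsub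
  have := M.mono (subset_inter (subset_insert e A) hAB)
  have := M.r_le_r_insert e B
  unfold Spans at *
  omega

lemma r_erase_erase_lt {B : Finset (Fin n)} {f g : Fin n} (hfg : f ≠ g)
    (hg : M.r (B.erase g) < M.r B) :
    M.r ((B.erase f).erase g) < M.r (B.erase f) := by
  have hsub := M.submod (B.erase f) (B.erase g)
  have hinter : B.erase f ∩ B.erase g = (B.erase f).erase g := by
    ext x; simp only [mem_inter, mem_erase]; tauto
  have hunion : B.erase f ∪ B.erase g = B := by
    ext x; simp only [mem_union, mem_erase]; grind
  rw [hinter, hunion] at hsub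
  omega

lemma indep_of_forall_r_erase_lt (B : Finset (Fin n))
    (hdrop : ∀ f ∈ B, M.r (B.erase f) < M.r B) : M.Indep B := by
  induction B using Finset.strongInduction with
  | H B ih =>
    rcases B.eq_empty_or_nonempty with rfl | ⟨f, hf⟩
    · exact M.r_empty
    have hdrop' : ∀ g ∈ B.erase f, M.r ((B.erase f).erase g) < M.r (B.erase f) :=
      fun g hg ↦ M.r_erase_erase_lt (ne_of_mem_erase hg).symm (hdrop g (mem_of_mem_erase hg))
    have hind := ih _ (erase_ssubset hf) hdrop'
    have hcard := card_erase_add_one hf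
    have := M.r_insert_le f (B.erase f)
    have := hdrop f hf
    rw [insert_erase hf] at *
    unfold Indep at *
    omega

/-- If `r (C - f) = r C`, then `f` is spanned by `C - f`, so everything spanned by `C` is
already spanned by `C - f`. -/
lemma r_erase_lt_of_spans {C : Finset (Fin n)} {e f : Fin n} (hf : f ∈ C)
    (hspan : M.Spans C e) (hnot : ¬ M.Spans (C.erase f) e) :
    M.r (C.erase f) < M.r C := by
  refine lt_of_le_of_ne (M.mono (erase_subset f C)) fun hr ↦ hnot ?_
  have hf_spans : M.Spans (C.erase f) f := by
    rw [Spans, insert_erase hf, hr]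
  have := hf_spans.mono (subset_insert e (C.erase f))
  unfold Spans at *
  rw [insert_comm, insert_erase hf, hspan, ← hr] at this
  omega

lemma isCircuit_insert {C : Finset (Fin n)} {e : Fin n} (hC : M.Indep C) (heC : e ∉ C)
    (hspan : M.Spans C e) (hmin : ∀ f ∈ C, ¬ M.Spans (C.erase f) e) :
    M.IsCircuit (insert e C) := by
  refine ⟨fun hind ↦ ?_, fun A hA ↦ ?_⟩
  · unfold Indep Spans at *
    rw [card_insert_of_notMem heC] at hind
    omega
  obtain ⟨g, hg, hAg⟩ := ssubset_iff_exists_subset_erase.mp hA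
  refine Indep.subset ?_ hAg
  rcases mem_insert.mp hg with rfl | hgC
  · rwa [erase_insert heC]
  · have hne : g ≠ e := fun h ↦ heC (h ▸ hgC)
    have hind := hC.subset (erase_subset g C)
    have hr := M.r_insert_of_not_spans (hmin g hgC)
    rw [erase_insert_of_ne hne.symm]
    unfold Indep at *
    rw [hr, hind, card_insert_of_notMem (fun h ↦ heC (mem_of_mem_erase h))]

variable {M} in
lemma IsCircuit.spans_of_insert {C : Finset (Fin n)} {e : Fin n}
    (h : M.IsCircuit (insert e C)) (heC : e ∉ C) : M.Spans C e := by
  obtain ⟨hdep, hmin⟩ := h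
  have hC : M.Indep C := hmin C (ssubset_insert heC)
  have := M.le_card (insert e C)
  have := M.r_le_r_insert e C
  unfold Indep Spans at *
  rw [card_insert_of_notMem heC] at *
  omega

lemma spans_of_forall_isCircuit (M₁ M₂ : MatroidRk n)
    (hsub : ∀ C, M₁.IsCircuit C → M₂.IsCircuit C) (C : Finset (Fin n)) (e : Fin n)
    (h : M₁.Spans C e) : M₂.Spans C e := by
  induction C using Finset.strongInduction with
  | H C ih =>
    by_cases heC : e ∈ C
    · rw [Spans, insert_eq_of_mem heC]
    by_cases hex : ∃ f ∈ C, M₁.Spans (C.erase f) e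
    · obtain ⟨f, hf, hfe⟩ := hex
      exact (ih _ (erase_ssubset hf) hfe).mono (erase_subset f C)
    push Not at hex
    have hC : M₁.Indep C :=
      M₁.indep_of_forall_r_erase_lt C fun f hf ↦ M₁.r_erase_lt_of_spans hf h (hex f hf)
    exact (hsub _ (M₁.isCircuit_insert hC heC h hex)).spans_of_insert heC

lemma r_insert_sub_le (M₁ M₂ : MatroidRk n) (hsub : ∀ C, M₁.IsCircuit C → M₂.IsCircuit C)
    (A : Finset (Fin n)) (e : Fin n) :
    (M₂.r (insert e A) : ℤ) - M₂.r A ≤ (M₁.r (insert e A) : ℤ) - M₁.r A := by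
  have := M₂.r_le_r_insert e A
  have := M₂.r_insert_le e A
  by_cases h : M₁.Spans A e
  · have := spans_of_forall_isCircuit M₁ M₂ hsub A e h
    unfold Spans at *
    omega
  · have := M₁.r_insert_of_not_spans h
    omega

lemma r_union_sub_le (M₁ M₂ : MatroidRk n) (hsub : ∀ C, M₁.IsCircuit C → M₂.IsCircuit C)
    (A S : Finset (Fin n)) :
    (M₂.r (A ∪ S) : ℤ) - M₂.r A ≤ (M₁.r (A ∪ S) : ℤ) - M₁.r A := by
  induction S using Finset.induction_on with
  | empty => simp
  | insert e S _ ih =>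
    rw [union_insert]
    have := r_insert_sub_le M₁ M₂ hsub (A ∪ S) e
    omega

end MatroidRk

theorem stmt6_general (n : ℕ) (M₁ M₂ : MatroidRk n)
    (hsub : ∀ C : Finset (Fin n), M₁.IsCircuit C → M₂.IsCircuit C)
    (C S : Finset (Fin n)) :
    (M₂.r (C ∪ S) : ℤ) - (M₂.r C : ℤ) ≤ (M₁.r (C ∪ S) : ℤ) - (M₁.r C : ℤ) :=
  MatroidRk.r_union_sub_le M₁ M₂ hsub C S

/-- if every circuit of `M₁` is a circuit of `M₂`, then for every `C` and
every `S` disjoint from `C`, `r_{M₁}(C∪S) − r_{M₁}(C) ≥ r_{M₂}(C∪S) − r_{M₂}(C)`. -/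
theorem stmt6 (n : ℕ) (M₁ M₂ : MatroidRk n)
    (hsub : ∀ C : Finset (Fin n), M₁.IsCircuit C → M₂.IsCircuit C)
    (C S : Finset (Fin n)) (hS : Disjoint S C) :
    (M₂.r (C ∪ S) : ℤ) - (M₂.r C : ℤ) ≤ (M₁.r (C ∪ S) : ℤ) - (M₁.r C : ℤ) :=
  stmt6_general n M₁ M₂ hsub C S
end

section
/- Let M be a matroid on N_n whose rank function spans an extreme ray of Γ_n, with r_M(N_n) = 2, and suppose there exists i ∈ N_n \ {1,2} such that {1,2,i} is a circuit of M and every j ∈ N_n \ {1,2,i} is either parallel to i in M or a loop of M. If a, b > 0 and a·r_M + b·r_{U_{1,2}^n} is entropic, then a + b ≥ log m, where m is the least integer with m ≥ exp(a). -/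
open Finset

/-!
Realize the entropic point by `(X_1, …, X_n)` and set `X₀ = X_1`, `X₁ = X_2`, `Z = X_i`. As
`{1, 2, i}` is a circuit of rank 2 and `r_{U_{1,2}^n}` only sees `1, 2`, the entropies are
`H(X₀) = H(X₁) = a + b`, `H(Z) = a`, and `2a + b` for every pair and for the triple. Hence `Z` is
independent of `X₀` and of `X₁` (equality in Gibbs' inequality), and any two of the three variables
determine the third. Let `k` be the number of values of `Z`. On an event `X₁ = y`, `Z` still takes
all `k` values and is a function of `X₀`, so `X₀` takes at least `k` values there; each of them has
probability `P(X₁ = y)`, because `P(X₀ = x) P(Z = z) = P(X₀ = x, Z = z) = P(X₁ = y, Z = z)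
= P(X₁ = y) P(Z = z)`. So every atom of `X₀` has probability at most `1/k`, whence
`log k ≤ H(X₀) = a + b`, while `a = H(Z) ≤ log k` gives `⌈exp a⌉ ≤ k`.
-/

open Real

lemma Finset.card_image_le_card_image_of_eq_imp_eq {α β γ : Type*} [DecidableEq β]
    [DecidableEq γ] {s : Finset α} {f : α → β} {g : α → γ}
    (h : ∀ a ∈ s, ∀ b ∈ s, f a = f b → g a = g b) : #(s.image g) ≤ #(s.image f) := by
  refine card_le_card_of_forall_subsingleton (fun c x => ∃ a ∈ s, g a = c ∧ f a = x)
    (fun c hc => ?_) fun x _ c₁ hc₁ c₂ hc₂ => ?_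
  · obtain ⟨a, ha, rfl⟩ := mem_image.1 hc
    exact ⟨f a, mem_image_of_mem f ha, a, ha, rfl, rfl⟩
  · obtain ⟨-, a₁, ha₁, rfl, rfl⟩ := hc₁
    obtain ⟨-, a₂, ha₂, rfl, hfa⟩ := hc₂
    exact h a₁ ha₁ a₂ ha₂ hfa.symm

section FiniteEntropy

variable {Ω S T U : Type} [Fintype Ω] [DecidableEq S] [DecidableEq T] [DecidableEq U]

/-- `Hent p V = ∑ s ∈ univ.image V, negMulLog (probEq p V s)` holds by definition. -/
noncomputable def probEq (p : Ω → ℝ) (V : Ω → S) (s : S) : ℝ :=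
  ∑ ω ∈ univ.filter (fun ω => V ω = s), p ω

lemma sum_mul_comp_eq_sum_probEq (p : Ω → ℝ) (V : Ω → S) (g : S → ℝ) :
    ∑ ω, p ω * g (V ω) = ∑ s ∈ univ.image V, probEq p V s * g s := by
  refine (Finset.sum_image' _ fun ω _ => ?_).symm
  rw [probEq, Finset.sum_mul]
  exact Finset.sum_congr rfl fun ω' hω' => by rw [(mem_filter.1 hω').2]

lemma sum_probEq_image (p : Ω → ℝ) (V : Ω → S) :
    ∑ s ∈ univ.image V, probEq p V s = ∑ ω, p ω := by
  simpa using (sum_mul_comp_eq_sum_probEq p V fun _ => 1).symm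

lemma Hent_eq_sum_mul_neg_log (p : Ω → ℝ) (V : Ω → S) :
    Hent p V = ∑ ω, p ω * -log (probEq p V (V ω)) := by
  rw [sum_mul_comp_eq_sum_probEq p V fun s => -log (probEq p V s)]
  exact Finset.sum_congr rfl fun s _ => by rw [negMulLog, probEq, neg_mul, mul_neg]

lemma probEq_congr (p : Ω → ℝ) {V : Ω → S} {W : Ω → T} {ω : Ω}
    (h : ∀ ω', V ω' = V ω ↔ W ω' = W ω) : probEq p V (V ω) = probEq p W (W ω) := by
  rw [probEq, probEq, Finset.filter_congr fun ω' _ => h ω']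

lemma Hent_congr (p : Ω → ℝ) {V : Ω → S} {W : Ω → T}
    (h : ∀ ω ω', V ω' = V ω ↔ W ω' = W ω) : Hent p V = Hent p W := by
  simp only [Hent_eq_sum_mul_neg_log, probEq_congr p (h _)]

lemma sum_eq_sum_subtype_pos {p : Ω → ℝ} (hp0 : ∀ ω, 0 ≤ p ω) (f : Ω → ℝ)
    (hf : ∀ ω, p ω = 0 → f ω = 0) : ∑ ω, f ω = ∑ ω : {ω // 0 < p ω}, f ω := by
  rw [← Finset.sum_subtype (univ.filter fun ω => 0 < p ω) (by simp)]
  refine (Finset.sum_filter_of_ne fun ω _ hω => ?_).symm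
  exact (hp0 ω).lt_of_ne fun h => hω (hf ω h.symm)

lemma Hent_eq_Hent_subtype_pos {p : Ω → ℝ} (hp0 : ∀ ω, 0 ≤ p ω) (V : Ω → S) :
    Hent p V = Hent (fun ω : {ω // 0 < p ω} => p ω) (fun ω => V ω) := by
  have hprob : ∀ s,
      probEq p V s = probEq (fun ω : {ω // 0 < p ω} => p ω) (fun ω => V ω) s := fun s => by
    rw [probEq, probEq, sum_filter, sum_filter]
    exact sum_eq_sum_subtype_pos hp0 _ fun ω h => by simp [h]
  rw [Hent_eq_sum_mul_neg_log, Hent_eq_sum_mul_neg_log,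
    sum_eq_sum_subtype_pos hp0 _ fun ω h => by simp [h]]
  simp only [hprob]

lemma probEq_nonneg {p : Ω → ℝ} (hp0 : ∀ ω, 0 ≤ p ω) (V : Ω → S) (s : S) :
    0 ≤ probEq p V s :=
  sum_nonneg fun ω _ => hp0 ω

lemma image_nonempty_of_sum_eq_one {p : Ω → ℝ} (hp1 : ∑ ω, p ω = 1) (V : Ω → S) :
    (univ.image V).Nonempty :=
  (nonempty_of_sum_ne_zero (hp1 ▸ one_ne_zero)).image V

lemma Hent_le_log_card {p : Ω → ℝ} (hp0 : ∀ ω, 0 ≤ p ω) (hp1 : ∑ ω, p ω = 1)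
    (V : Ω → S) : Hent p V ≤ log #(univ.image V) := by
  have hk : (0 : ℝ) < #(univ.image V) := by
    exact_mod_cast card_pos.2 (image_nonempty_of_sum_eq_one hp1 V)
  have hJensen := concaveOn_negMulLog.le_map_sum (t := univ.image V)
    (w := fun _ => (#(univ.image V) : ℝ)⁻¹) (p := probEq p V) (fun _ _ => by positivity)
    (by simp [hk.ne']) fun s _ => probEq_nonneg hp0 V s
  simp only [smul_eq_mul, ← Finset.mul_sum, sum_probEq_image, hp1, mul_one] at hJensen
  rw [negMulLog, log_inv] at hJensen
  change ∑ s ∈ univ.image V, negMulLog (probEq p V s) ≤ _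
  exact le_of_mul_le_mul_left (by linarith) (inv_pos.2 hk)

lemma eq_one_of_sum_mul_le_of_sum_mul_log_nonneg {ι : Type*} [Fintype ι] {w f : ι → ℝ}
    (hw : ∀ i, 0 < w i) (hf : ∀ i, 0 < f i) (hsum : ∑ i, w i * f i ≤ ∑ i, w i)
    (hlog : 0 ≤ ∑ i, w i * log (f i)) (i : ι) : f i = 1 := by
  have hterm : ∀ i ∈ univ, w i * log (f i) ≤ w i * (f i - 1) := fun i _ =>
    mul_le_mul_of_nonneg_left (log_le_sub_one_of_pos (hf i)) (hw i).le
  have heq : ∑ i, w i * log (f i) = ∑ i, w i * (f i - 1) := by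
    refine le_antisymm (sum_le_sum hterm) ?_
    simp only [mul_sub, mul_one, sum_sub_distrib]
    linarith
  by_contra hne
  exact (log_lt_sub_one_of_pos (hf i) hne).ne
    (mul_left_cancel₀ (hw i).ne' ((sum_eq_sum_iff_of_le hterm).1 heq i (mem_univ i)))

lemma probEq_pos {p : Ω → ℝ} (hp : ∀ ω, 0 < p ω) (V : Ω → S) (ω : Ω) :
    0 < probEq p V (V ω) :=
  (hp ω).trans_le (single_le_sum (fun ω' _ => (hp ω').le) (by simp))

lemma log_le_Hent {p : Ω → ℝ} (hp : ∀ ω, 0 < p ω) (hp1 : ∑ ω, p ω = 1) {V : Ω → S}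
    {c : ℝ} (hc : 0 < c) (h : ∀ ω, c * probEq p V (V ω) ≤ 1) : log c ≤ Hent p V := by
  rw [Hent_eq_sum_mul_neg_log]
  calc log c = ∑ ω, p ω * log c := by rw [← sum_mul, hp1, one_mul]
    _ ≤ _ := sum_le_sum fun ω _ => by
      refine mul_le_mul_of_nonneg_left ?_ (hp ω).le
      have hq := probEq_pos hp V ω
      have := log_nonpos (by positivity) (h ω)
      rw [log_mul hc.ne' hq.ne'] at this
      linarith

lemma eq_of_Hent_eq {p : Ω → ℝ} (hp : ∀ ω, 0 < p ω) {V : Ω → S} {W : Ω → T}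
    (hWV : ∀ ω ω', V ω = V ω' → W ω = W ω') (h : Hent p V = Hent p W) {ω ω' : Ω}
    (hW : W ω = W ω') : V ω = V ω' := by
  have hsub : ∀ ω, univ.filter (V · = V ω) ⊆ univ.filter (W · = W ω) := fun ω ω' hω' => by
    simp only [mem_filter, mem_univ, true_and] at hω' ⊢
    exact hWV _ _ hω'
  have hle : ∀ ω, probEq p V (V ω) ≤ probEq p W (W ω) := fun ω =>
    sum_le_sum_of_subset_of_nonneg (hsub ω) fun ω' _ _ => (hp ω').le
  have hterm : ∀ ω ∈ univ,
      p ω * -log (probEq p W (W ω)) ≤ p ω * -log (probEq p V (V ω)) := fun ω _ =>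
    mul_le_mul_of_nonneg_left (neg_le_neg (log_le_log (probEq_pos hp V ω) (hle ω))) (hp ω).le
  have heq := (sum_eq_sum_iff_of_le hterm).1
    (by rw [← Hent_eq_sum_mul_neg_log, ← Hent_eq_sum_mul_neg_log, h]) ω (mem_univ ω)
  have hlog := neg_inj.1 (mul_left_cancel₀ (hp ω).ne' heq)
  by_contra hne
  refine (log_lt_log (probEq_pos hp V ω) ?_).ne' hlog
  exact sum_lt_sum_of_subset (hsub ω) (i := ω') (by simp [hW])
    (by simpa using Ne.symm hne) (hp ω') fun j _ _ => (hp j).le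

lemma sum_probEq_mul_probEq_product {p : Ω → ℝ} (hp1 : ∑ ω, p ω = 1) (Y : Ω → S)
    (Z : Ω → T) :
    ∑ s ∈ univ.image Y ×ˢ univ.image Z, probEq p Y s.1 * probEq p Z s.2 = 1 := by
  rw [sum_product, ← sum_mul_sum, sum_probEq_image, sum_probEq_image, hp1, one_mul]

lemma image_pair_subset_product (Y : Ω → S) (Z : Ω → T) :
    univ.image (fun ω => (Y ω, Z ω)) ⊆ univ.image Y ×ˢ univ.image Z := by
  intro s hs
  obtain ⟨ω, -, rfl⟩ := mem_image.1 hs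
  exact mem_product.2 ⟨mem_image_of_mem Y (mem_univ ω), mem_image_of_mem Z (mem_univ ω)⟩

/-- The equality case of Gibbs' inequality, for the ratio `P(Y) P(Z) / P(Y, Z)`. -/
lemma probEq_pair_eq_mul_of_Hent_eq_add {p : Ω → ℝ} (hp : ∀ ω, 0 < p ω)
    (hp1 : ∑ ω, p ω = 1) {Y : Ω → S} {Z : Ω → T}
    (h : Hent p (fun ω => (Y ω, Z ω)) = Hent p Y + Hent p Z) (ω : Ω) :
    probEq p (fun ω => (Y ω, Z ω)) (Y ω, Z ω) = probEq p Y (Y ω) * probEq p Z (Z ω) := by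
  set W := fun ω => (Y ω, Z ω)
  set ratio := fun ω => probEq p Y (Y ω) * probEq p Z (Z ω) / probEq p W (W ω)
  have hp0 := fun ω => (hp ω).le
  have hW := probEq_pos hp W
  have hY := probEq_pos hp Y
  have hZ := probEq_pos hp Z
  have hsum : ∑ ω, p ω * ratio ω ≤ ∑ ω, p ω := by
    rw [sum_mul_comp_eq_sum_probEq p W fun s => probEq p Y s.1 * probEq p Z s.2 / probEq p W s,
      hp1, ← sum_probEq_mul_probEq_product hp1 Y Z]
    refine (sum_le_sum_of_subset_of_nonneg (image_pair_subset_product Y Z) fun s _ _ =>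
      mul_nonneg (probEq_nonneg hp0 Y _) (probEq_nonneg hp0 Z _)).trans_eq'
        (sum_congr rfl fun s hs => ?_)
    obtain ⟨ω', -, rfl⟩ := mem_image.1 hs
    rw [mul_div_cancel₀ _ (hW ω').ne']
  have hlog : 0 ≤ ∑ ω, p ω * log (ratio ω) := by
    have hsplit : ∀ ω, p ω * log (ratio ω) = p ω * -log (probEq p W (W ω))
        - p ω * -log (probEq p Y (Y ω)) - p ω * -log (probEq p Z (Z ω)) := fun ω => by
      rw [log_div (mul_pos (hY ω) (hZ ω)).ne' (hW ω).ne', log_mul (hY ω).ne' (hZ ω).ne']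
      ring
    simp only [hsplit, sum_sub_distrib, ← Hent_eq_sum_mul_neg_log, h]
    linarith
  have := eq_one_of_sum_mul_le_of_sum_mul_log_nonneg hp
    (fun ω => div_pos (mul_pos (hY ω) (hZ ω)) (hW ω)) hsum hlog ω
  exact ((div_eq_one_iff_eq (hW ω).ne').1 this).symm

lemma exists_eq_and_eq_of_Hent_eq_add {p : Ω → ℝ} (hp : ∀ ω, 0 < p ω)
    (hp1 : ∑ ω, p ω = 1) {Y : Ω → S} {Z : Ω → T}
    (h : Hent p (fun ω => (Y ω, Z ω)) = Hent p Y + Hent p Z) (ω ω' : Ω) :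
    ∃ ω'', Y ω'' = Y ω ∧ Z ω'' = Z ω' := by
  by_contra hne
  have hmem : (Y ω, Z ω') ∉ univ.image (fun ω => (Y ω, Z ω)) := by
    simpa [not_and] using hne
  have hlt := sum_lt_sum_of_subset (f := fun s => probEq p Y s.1 * probEq p Z s.2)
    (image_pair_subset_product Y Z)
    (mem_product.2 ⟨mem_image_of_mem Y (mem_univ ω), mem_image_of_mem Z (mem_univ ω')⟩) hmem
    (mul_pos (probEq_pos hp Y ω) (probEq_pos hp Z ω'))
    fun s _ _ => mul_nonneg (probEq_nonneg (fun ω => (hp ω).le) Y _)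
      (probEq_nonneg (fun ω => (hp ω).le) Z _)
  have hprod : ∀ s ∈ univ.image (fun ω => (Y ω, Z ω)),
      probEq p Y s.1 * probEq p Z s.2 = probEq p (fun ω => (Y ω, Z ω)) s :=
    forall_mem_image.2 fun ω _ => (probEq_pair_eq_mul_of_Hent_eq_add hp hp1 h ω).symm
  rw [sum_congr rfl hprod, sum_probEq_image, sum_probEq_mul_probEq_product hp1, hp1] at hlt
  exact lt_irrefl _ hlt

/-- On the event `X₁ = X₁ ω₀` the variable `Z` takes all its values and is a function of `X₀`, so
`X₀` takes at least `#(univ.image Z)` values there, each as likely as `X₀ ω₀`. -/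
lemma card_image_mul_probEq_le_one {p : Ω → ℝ} (hp : ∀ ω, 0 < p ω) (hp1 : ∑ ω, p ω = 1)
    {X₀ : Ω → S} {X₁ : Ω → T} {Z : Ω → U}
    (h₀ : Hent p (fun ω => (X₀ ω, Z ω)) = Hent p X₀ + Hent p Z)
    (h₁ : Hent p (fun ω => (X₁ ω, Z ω)) = Hent p X₁ + Hent p Z)
    (hX₀ : ∀ ω ω', X₁ ω = X₁ ω' → Z ω = Z ω' → X₀ ω = X₀ ω')
    (hX₁ : ∀ ω ω', X₀ ω = X₀ ω' → Z ω = Z ω' → X₁ ω = X₁ ω')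
    (hZ : ∀ ω ω', X₀ ω = X₀ ω' → X₁ ω = X₁ ω' → Z ω = Z ω') (ω₀ : Ω) :
    #(univ.image Z) * probEq p X₀ (X₀ ω₀) ≤ 1 := by
  have hprob : ∀ ω, probEq p X₀ (X₀ ω) = probEq p X₁ (X₁ ω) := fun ω => by
    have hfiber := probEq_congr p (ω := ω) (V := fun ω => (X₀ ω, Z ω))
      (W := fun ω => (X₁ ω, Z ω)) fun ω' => by
        simp only [Prod.mk.injEq]
        exact ⟨fun h => ⟨hX₁ _ _ h.1 h.2, h.2⟩, fun h => ⟨hX₀ _ _ h.1 h.2, h.2⟩⟩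
    rw [probEq_pair_eq_mul_of_Hent_eq_add hp hp1 h₀,
      probEq_pair_eq_mul_of_Hent_eq_add hp hp1 h₁] at hfiber
    exact mul_right_cancel₀ (probEq_pos hp Z ω).ne' hfiber
  set F := univ.filter fun ω => X₁ ω = X₁ ω₀
  have hcard : #(univ.image Z) ≤ #(F.image X₀) := by
    have hZF : univ.image Z = F.image Z := by
      ext z
      simp only [mem_image, mem_univ, true_and, F, mem_filter]
      constructor
      · rintro ⟨ω, rfl⟩
        exact exists_eq_and_eq_of_Hent_eq_add hp hp1 h₁ ω₀ ω
      · rintro ⟨ω, -, rfl⟩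
        exact ⟨ω, rfl⟩
    rw [hZF]
    refine card_image_le_card_image_of_eq_imp_eq fun ω hω ω' hω' h => hZ _ _ h ?_
    rw [(mem_filter.1 hω).2, (mem_filter.1 hω').2]
  have hconst : ∀ x ∈ F.image X₀, probEq p X₀ x = probEq p X₀ (X₀ ω₀) := by
    refine forall_mem_image.2 fun ω hω => ?_
    rw [hprob, hprob, (mem_filter.1 hω).2]
  calc (#(univ.image Z) : ℝ) * probEq p X₀ (X₀ ω₀)
      ≤ #(F.image X₀) * probEq p X₀ (X₀ ω₀) := by
        gcongr
        exact probEq_nonneg (fun ω => (hp ω).le) X₀ _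
    _ = ∑ x ∈ F.image X₀, probEq p X₀ x := by
        rw [sum_congr rfl hconst, sum_const, nsmul_eq_mul]
    _ ≤ ∑ x ∈ univ.image X₀, probEq p X₀ x :=
        sum_le_sum_of_subset_of_nonneg (image_subset_image (filter_subset _ _))
          fun x _ _ => probEq_nonneg (fun ω => (hp ω).le) X₀ x
    _ = 1 := by rw [sum_probEq_image, hp1]

theorem log_ceil_exp_Hent_le {p : Ω → ℝ} (hp : ∀ ω, 0 < p ω) (hp1 : ∑ ω, p ω = 1)
    {X₀ : Ω → S} {X₁ : Ω → T} {Z : Ω → U}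
    (h₀ : Hent p (fun ω => (X₀ ω, Z ω)) = Hent p X₀ + Hent p Z)
    (h₁ : Hent p (fun ω => (X₁ ω, Z ω)) = Hent p X₁ + Hent p Z)
    (h₀₁Z : Hent p (fun ω => (X₀ ω, X₁ ω, Z ω)) = Hent p (fun ω => (X₀ ω, X₁ ω)))
    (h₀Z : Hent p (fun ω => (X₀ ω, X₁ ω, Z ω)) = Hent p (fun ω => (X₀ ω, Z ω)))
    (h₁Z : Hent p (fun ω => (X₀ ω, X₁ ω, Z ω)) = Hent p (fun ω => (X₁ ω, Z ω))) :
    log ⌈exp (Hent p Z)⌉ ≤ Hent p X₀ := by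
  have hX₀ : ∀ ω ω', X₁ ω = X₁ ω' → Z ω = Z ω' → X₀ ω = X₀ ω' := fun ω ω' h hz =>
    congrArg Prod.fst (eq_of_Hent_eq hp (fun _ _ h => by simp_all) h₁Z (by simp [h, hz]))
  have hX₁ : ∀ ω ω', X₀ ω = X₀ ω' → Z ω = Z ω' → X₁ ω = X₁ ω' := fun ω ω' h hz =>
    congrArg (·.2.1) (eq_of_Hent_eq hp (fun _ _ h => by simp_all) h₀Z (by simp [h, hz]))
  have hZ : ∀ ω ω', X₀ ω = X₀ ω' → X₁ ω = X₁ ω' → Z ω = Z ω' := fun ω ω' h h' =>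
    congrArg (·.2.2) (eq_of_Hent_eq hp (fun _ _ h => by simp_all) h₀₁Z (by simp [h, h']))
  have hk : (0 : ℝ) < #(univ.image Z) := by
    exact_mod_cast card_pos.2 (image_nonempty_of_sum_eq_one hp1 Z)
  have hexp : exp (Hent p Z) ≤ #(univ.image Z) :=
    (exp_le_exp.2 (Hent_le_log_card (fun ω => (hp ω).le) hp1 Z)).trans_eq (exp_log hk)
  calc log ⌈exp (Hent p Z)⌉ ≤ log #(univ.image Z) :=
        log_le_log (by exact_mod_cast Int.ceil_pos.2 (exp_pos _))
          (by exact_mod_cast Int.ceil_le.2 (by exact_mod_cast hexp))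
    _ ≤ Hent p X₀ := log_le_Hent hp hp1 hk
        (card_image_mul_probEq_le_one hp hp1 h₀ h₁ hX₀ hX₁ hZ)

end FiniteEntropy

lemma joint_eq_joint_iff {Ω : Type} {n : ℕ} (X : Fin n → Ω → ℕ) {A : Finset (Fin n)}
    {ω ω' : Ω} :
    joint X A ω = joint X A ω' ↔ ∀ j ∈ A, X j ω = X j ω' :=
  ⟨fun h j hj => congrFun h ⟨j, hj⟩, fun h => funext fun j => h j j.2⟩

section Joint

variable {Ω : Type} [Fintype Ω] {n : ℕ} (p : Ω → ℝ) (X : Fin n → Ω → ℕ)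

lemma Hent_joint_singleton (e : Fin n) : Hent p (joint X {e}) = Hent p (X e) :=
  Hent_congr p fun _ _ => by simp [joint_eq_joint_iff]

lemma Hent_joint_pair (e f : Fin n) :
    Hent p (joint X {e, f}) = Hent p (fun ω => (X e ω, X f ω)) :=
  Hent_congr p fun _ _ => by simp [joint_eq_joint_iff]

lemma Hent_joint_triple (e f g : Fin n) :
    Hent p (joint X {e, f, g}) = Hent p (fun ω => (X e ω, X f ω, X g ω)) :=
  Hent_congr p fun _ _ => by simp [joint_eq_joint_iff]

end Joint

theorem log_ceil_exp_le_of_isEntropic {n : ℕ} {h : Finset (Fin n) → ℝ} (hh : IsEntropic h)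
    {e₀ e₁ i : Fin n} (h₀ : h {e₀, i} = h {e₀} + h {i}) (h₁ : h {e₁, i} = h {e₁} + h {i})
    (h₀₁i : h {e₀, e₁, i} = h {e₀, e₁}) (h₀i : h {e₀, e₁, i} = h {e₀, i})
    (h₁i : h {e₀, e₁, i} = h {e₁, i}) :
    log ⌈exp (h {i})⌉ ≤ h {e₀} := by
  obtain ⟨N, p, X, hp0, hp1, hX⟩ := hh
  set q : {ω // 0 < p ω} → ℝ := fun ω => p ω
  set Y : Fin n → {ω // 0 < p ω} → ℕ := fun j ω => X j ω
  have hY : ∀ A, h A = Hent q (joint Y A) := fun A =>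
    (hX A).trans (Hent_eq_Hent_subtype_pos hp0 _)
  have hq1 : ∑ ω, q ω = 1 := by
    rw [← hp1]
    exact (sum_eq_sum_subtype_pos hp0 p fun _ => id).symm
  simp only [hY, Hent_joint_singleton, Hent_joint_pair, Hent_joint_triple] at h₀ h₁ h₀₁i h₀i h₁i ⊢
  exact log_ceil_exp_Hent_le (fun ω => ω.2) hq1 h₀ h₁ h₀₁i h₀i h₁i

lemma MatroidRk.IsCircuit.r_add_one {n : ℕ} {M : MatroidRk n} {C : Finset (Fin n)}
    (hC : M.IsCircuit C) : M.r C + 1 = #C := by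
  obtain ⟨x, hx⟩ : C.Nonempty := nonempty_iff_ne_empty.2 fun h => hC.1 <| by
    rw [h, MatroidRk.Indep, card_empty]
    exact Nat.le_zero.1 (card_empty (α := Fin n) ▸ M.le_card ∅)
  have herase : M.r (C.erase x) = #C - 1 := by
    rw [← card_erase_of_mem hx]
    exact hC.2 _ (erase_ssubset hx)
  have hle := M.mono (erase_subset x C)
  have hne : M.r C ≠ #C := hC.1
  have := M.le_card C
  have := card_pos.2 ⟨x, hx⟩
  omega

theorem log_ceil_exp_le_of_isCircuit {n : ℕ} (M : MatroidRk n) {e₀ e₁ i : Fin n}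
    (h₀₁ : e₀ ≠ e₁) (h₀i : e₀ ≠ i) (h₁i : e₁ ≠ i) (hC : M.IsCircuit {e₀, e₁, i})
    {u : Finset (Fin n) → ℝ} (hu₀ : ∀ A, e₀ ∈ A → u A = 1) (hu₁ : ∀ A, e₁ ∈ A → u A = 1)
    (hui : u {i} = 0) {a b : ℝ} (hent : IsEntropic fun A => a * M.rr A + b * u A) :
    log ⌈exp a⌉ ≤ a + b := by
  have hcard : #({e₀, e₁, i} : Finset (Fin n)) = 3 := by
    rw [card_insert_of_notMem (by simp [h₀₁, h₀i]), card_pair h₁i]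
  have hr : ∀ A ⊆ {e₀, e₁, i}, #A < 3 → M.r A = #A := fun A hA hlt =>
    hC.2 A (hA.ssubset_of_ne fun h => by rw [h, hcard] at hlt; exact lt_irrefl _ hlt)
  have hrC : M.r {e₀, e₁, i} = 2 := by have := hC.r_add_one; omega
  have h1 : ∀ x ∈ ({e₀, e₁, i} : Finset (Fin n)), M.r {x} = 1 := fun x hx =>
    hr {x} (singleton_subset_iff.2 hx) (by simp)
  have h2 : ∀ x ∈ ({e₀, e₁, i} : Finset (Fin n)), ∀ y ∈ ({e₀, e₁, i} : Finset (Fin n)), x ≠ y →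
      M.r {x, y} = 2 := fun x hx y hy hxy => by
    rw [hr {x, y} (insert_subset hx (singleton_subset_iff.2 hy)) (by simp [card_pair hxy]),
      card_pair hxy]
  have := log_ceil_exp_le_of_isEntropic hent (e₀ := e₀) (e₁ := e₁) (i := i)
    (by simp [MatroidRk.rr, h1, h2, hu₀, hui, h₀i]; ring)
    (by simp [MatroidRk.rr, h1, h2, hu₁, hui, h₁i]; ring)
    (by simp [MatroidRk.rr, hrC, h2, hu₀, h₀₁])
    (by simp [MatroidRk.rr, hrC, h2, hu₀, h₀i])
    (by simp [MatroidRk.rr, hrC, h2, hu₀, hu₁, h₁i])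
  simpa [MatroidRk.rr, h1, hu₀, hui] using this

lemma rUone_eq_one {n k : ℕ} {A : Finset (Fin n)} {e : Fin n} (he : e ∈ A) (hek : (e : ℕ) < k) :
    rUone n k A = 1 :=
  if_pos ⟨e, mem_inter.2 ⟨he, by simpa [alphaSet] using hek⟩⟩

lemma rUone_singleton_eq_zero {n k : ℕ} {e : Fin n} (hek : k ≤ e) : rUone n k {e} = 0 :=
  if_neg fun ⟨x, hx⟩ => by
    simp only [mem_inter, mem_singleton, alphaSet, mem_filter, mem_univ, true_and] at hx
    omega

/-- Matúš-type outer bound: for `M` of rank 2 spanning an extreme ray of `Γ_n`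
with a circuit `{1,2,i}` such that every other element is parallel to `i` or a loop, if
`a·r_M + b·r_{U_{1,2}^n}` is entropic with `a, b > 0`, then `a + b ≥ log ⌈exp a⌉`. -/
theorem stmt9 (n : ℕ) (hn : 2 ≤ n) (M : MatroidRk n)
    (hC : ∃ i : Fin n, i ∉ ({⟨0, by omega⟩, ⟨1, by omega⟩} : Finset (Fin n)) ∧
      M.IsCircuit {⟨0, by omega⟩, ⟨1, by omega⟩, i} ∧
      ∀ j : Fin n, j ∉ ({⟨0, by omega⟩, ⟨1, by omega⟩, i} : Finset (Fin n)) →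
        M.Parallel j i ∨ M.IsLoop j)
    (a b : ℝ)
    (hent : IsEntropic (fun A => a * M.rr A + b * rUone n 2 A)) :
    Real.log ((⌈Real.exp a⌉ : ℤ) : ℝ) ≤ a + b := by
  obtain ⟨i, hi, hcirc, -⟩ := hC
  simp only [mem_insert, mem_singleton, not_or, Fin.ext_iff] at hi
  exact log_ceil_exp_le_of_isCircuit M (by simp [Fin.ext_iff]) (by simp [Fin.ext_iff]; omega)
    (by simp [Fin.ext_iff]; omega) hcirc (fun A hA => rUone_eq_one hA (by simp))
    (fun A hA => rUone_eq_one hA (by simp)) (rUone_singleton_eq_zero (by omega)) hent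
end
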